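/- Let ν be a σ-finite measure, P_1,…,P_K probability measures equivalent to ν with densities f_k = dP_k/dν, weights π_k ∈ [0,1] with Σ_k π_k = 1, Z := ∫ Π_k f_k^{π_k} dν ∈ (0,∞), and G the probability measure with dG/dν = Π_k f_k^{π_k}/Z. Let S be any set of probability measures Q with Q ≪ ν, KL(Q‖ν) < ∞, and log f_k ∈ L¹(Q) for all k. Then Q_0 ∈ S minimises Q ↦ Σ_k π_k KL(Q‖P_k) over S if and only if Q_0 minimises Q ↦ KL(Q‖G) over S. -/

import Mathlib

open MeasureTheory
open scoped ENNReal

/-- Kullback–Leibler divergence `KL(Q‖P) = ∫ log(dQ/dP) dQ`. -/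
noncomputable def klDiv {Ω : Type*} [MeasurableSpace Ω] (Q P : Measure Ω) : ℝ :=
  ∫ ω, Real.log ((Q.rnDeriv P) ω).toReal ∂Q

/-!
Write `A(Q) = ∫ log (dQ/dν) dQ`. Since `dQ/dP_k = (dQ/dν) / f_k`, we get
`KL(Q‖P_k) = A(Q) - ∫ log f_k dQ`, and since `dQ/dG = Z (dQ/dν) / ∏ f_k ^ π_k`, we get
`KL(Q‖G) = A(Q) - ∑ π_k ∫ log f_k dQ + log Z`. As `∑ π_k = 1`, the two objectives differ by the
constant `log Z`, so they have the same minimisers.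
-/

namespace ENNReal

variable {ι : Type*} {s : Finset ι} {x : ι → ℝ≥0∞} {Z : ℝ≥0∞}

lemma prod_rpow_div_ne_zero (hx0 : ∀ i ∈ s, x i ≠ 0) (hxtop : ∀ i ∈ s, x i ≠ ∞) (hZ : Z ≠ ∞)
    (w : ι → ℝ) : (∏ i ∈ s, x i ^ w i) / Z ≠ 0 :=
  ENNReal.div_ne_zero.2 ⟨Finset.prod_ne_zero_iff.2 fun i hi =>
    (ENNReal.rpow_pos (pos_iff_ne_zero.2 (hx0 i hi)) (hxtop i hi)).ne', hZ⟩

lemma prod_rpow_div_ne_top (hx0 : ∀ i ∈ s, x i ≠ 0) (hxtop : ∀ i ∈ s, x i ≠ ∞) (hZ : Z ≠ 0)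
    (w : ι → ℝ) : (∏ i ∈ s, x i ^ w i) / Z ≠ ∞ :=
  ENNReal.div_ne_top (ENNReal.prod_ne_top fun i hi =>
    ENNReal.rpow_ne_top_of_ne_zero (hx0 i hi) (hxtop i hi)) hZ

lemma log_toReal_prod_rpow_div (hx0 : ∀ i ∈ s, x i ≠ 0) (hxtop : ∀ i ∈ s, x i ≠ ∞)
    (hZ0 : Z ≠ 0) (hZtop : Z ≠ ∞) (w : ι → ℝ) :
    Real.log ((∏ i ∈ s, x i ^ w i) / Z).toReal =
      ∑ i ∈ s, w i * Real.log (x i).toReal - Real.log Z.toReal := by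
  have hx : ∀ i ∈ s, 0 < (x i).toReal := fun i hi => ENNReal.toReal_pos (hx0 i hi) (hxtop i hi)
  have hprod : (∏ i ∈ s, x i ^ w i).toReal = ∏ i ∈ s, (x i).toReal ^ w i := by
    rw [ENNReal.toReal_prod]
    exact Finset.prod_congr rfl fun i _ => (ENNReal.toReal_rpow _ _).symm
  have hprod_pos : 0 < ∏ i ∈ s, (x i).toReal ^ w i :=
    Finset.prod_pos fun i hi => Real.rpow_pos_of_pos (hx i hi) _
  rw [ENNReal.toReal_div, hprod, Real.log_div hprod_pos.ne' (ENNReal.toReal_pos hZ0 hZtop).ne',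
    Real.log_prod fun i hi => (Real.rpow_pos_of_pos (hx i hi) _).ne']
  congr 1
  exact Finset.sum_congr rfl fun i hi => Real.log_rpow (hx i hi) _

end ENNReal

namespace MeasureTheory

variable {Ω : Type*} [MeasurableSpace Ω] {ν Q : Measure Ω} {h : Ω → ℝ≥0∞}

lemma ae_ne_zero_of_absolutelyContinuous_withDensity (hh : Measurable h)
    (hν : ν ≪ ν.withDensity h) : ∀ᵐ ω ∂ν, h ω ≠ 0 :=
  hν.ae_le ((ae_withDensity_iff hh).2 (ae_of_all _ fun _ => id))

lemma ae_ne_top_of_isFiniteMeasure_withDensity (hh : Measurable h)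
    [IsFiniteMeasure (ν.withDensity h)] : ∀ᵐ ω ∂ν, h ω ≠ ∞ := by
  have hint : ∫⁻ ω, h ω ∂ν ≠ ∞ := by
    simpa [withDensity_apply _ MeasurableSet.univ] using measure_ne_top (ν.withDensity h) .univ
  filter_upwards [ae_lt_top hh hint] with ω hω using hω.ne

lemma log_rnDeriv_withDensity_ae_eq [SigmaFinite ν] [SigmaFinite Q] (hQν : Q ≪ ν)
    (hh : AEMeasurable h ν) (h0 : ∀ᵐ ω ∂ν, h ω ≠ 0) (htop : ∀ᵐ ω ∂ν, h ω ≠ ∞) :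
    (fun ω => Real.log (Q.rnDeriv (ν.withDensity h) ω).toReal) =ᵐ[Q]
      fun ω => Real.log (Q.rnDeriv ν ω).toReal - Real.log (h ω).toReal := by
  filter_upwards [hQν.ae_le (Measure.rnDeriv_withDensity_right Q ν hh h0 htop),
    Measure.rnDeriv_pos hQν, hQν.ae_le (Measure.rnDeriv_ne_top Q ν), hQν.ae_le h0,
    hQν.ae_le htop] with ω hrn hpos hfin hω0 hωtop
  rw [hrn, ENNReal.toReal_mul, ENNReal.toReal_inv,
    Real.log_mul (inv_ne_zero (ENNReal.toReal_pos hω0 hωtop).ne')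
      (ENNReal.toReal_pos hpos.ne' hfin).ne', Real.log_inv]
  ring

lemma klDiv_withDensity [SigmaFinite ν] [SigmaFinite Q] (hQν : Q ≪ ν)
    (hh : AEMeasurable h ν) (h0 : ∀ᵐ ω ∂ν, h ω ≠ 0) (htop : ∀ᵐ ω ∂ν, h ω ≠ ∞)
    (hQ : Integrable (fun ω => Real.log (Q.rnDeriv ν ω).toReal) Q)
    (hlog : Integrable (fun ω => Real.log (h ω).toReal) Q) :
    klDiv Q (ν.withDensity h) = klDiv Q ν - ∫ ω, Real.log (h ω).toReal ∂Q := by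
  rw [klDiv, integral_congr_ae (log_rnDeriv_withDensity_ae_eq hQν hh h0 htop),
    integral_sub hQ hlog, klDiv]

lemma sum_mul_klDiv_withDensity_eq_klDiv_geometricMean_sub {ι : Type*} [Fintype ι]
    [SigmaFinite ν] [IsProbabilityMeasure Q] (hQν : Q ≪ ν) {f : ι → Ω → ℝ≥0∞}
    (hf : ∀ i, Measurable (f i)) (hf0 : ∀ i, ∀ᵐ ω ∂ν, f i ω ≠ 0) (hftop : ∀ i, ∀ᵐ ω ∂ν, f i ω ≠ ∞)
    {π : ι → ℝ} (hπ : ∑ i, π i = 1) {Z : ℝ≥0∞} (hZ0 : Z ≠ 0) (hZtop : Z ≠ ∞)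
    (hQ : Integrable (fun ω => Real.log (Q.rnDeriv ν ω).toReal) Q)
    (hlog : ∀ i, Integrable (fun ω => Real.log (f i ω).toReal) Q) :
    ∑ i, π i * klDiv Q (ν.withDensity (f i)) =
      klDiv Q (ν.withDensity fun ω => (∏ i, f i ω ^ π i) / Z) - Real.log Z.toReal := by
  have hf0' : ∀ᵐ ω ∂ν, ∀ i ∈ Finset.univ, f i ω ≠ 0 := by simpa using ae_all_iff.2 hf0
  have hftop' : ∀ᵐ ω ∂ν, ∀ i ∈ Finset.univ, f i ω ≠ ∞ := by simpa using ae_all_iff.2 hftop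
  have hlog_geom : (fun ω => Real.log ((∏ i, f i ω ^ π i) / Z).toReal) =ᵐ[Q]
      fun ω => ∑ i, π i * Real.log (f i ω).toReal - Real.log Z.toReal :=
    hQν.ae_le <| by
      filter_upwards [hf0', hftop'] with ω h0 htop
      exact ENNReal.log_toReal_prod_rpow_div h0 htop hZ0 hZtop π
  have hlog_sum : Integrable (fun ω => ∑ i, π i * Real.log (f i ω).toReal) Q :=
    integrable_finsetSum _ fun i _ => (hlog i).const_mul _
  have hgeom0 : ∀ᵐ ω ∂ν, (∏ i, f i ω ^ π i) / Z ≠ 0 := by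
    filter_upwards [hf0', hftop'] with ω h0 htop
    exact ENNReal.prod_rpow_div_ne_zero h0 htop hZtop π
  have hgeomtop : ∀ᵐ ω ∂ν, (∏ i, f i ω ^ π i) / Z ≠ ∞ := by
    filter_upwards [hf0', hftop'] with ω h0 htop
    exact ENNReal.prod_rpow_div_ne_top h0 htop hZ0 π
  rw [klDiv_withDensity hQν (by fun_prop) hgeom0 hgeomtop hQ
      ((hlog_sum.sub (integrable_const _)).congr hlog_geom.symm),
    integral_congr_ae hlog_geom, integral_sub hlog_sum (integrable_const _),
    integral_finsetSum _ fun i _ => (hlog i).const_mul _]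
  simp only [klDiv_withDensity hQν (hf _).aemeasurable (hf0 _) (hftop _) hQ (hlog _), mul_sub,
    Finset.sum_sub_distrib, ← Finset.sum_mul, hπ, integral_const_mul, integral_const,
    probReal_univ, smul_eq_mul, one_mul]
  ring

end MeasureTheory

theorem stmt10_general {Ω : Type*} [MeasurableSpace Ω] (ν : Measure Ω) [SigmaFinite ν]
    (K : ℕ) (P : Fin K → Measure Ω) [∀ k, IsProbabilityMeasure (P k)]
    (f : Fin K → Ω → ℝ≥0∞) (hf : ∀ k, Measurable (f k))
    (hPf : ∀ k, P k = ν.withDensity (f k))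
    (hequiv : ∀ k, P k ≪ ν ∧ ν ≪ P k)
    (π : Fin K → ℝ) (hπsum : ∑ k, π k = 1)
    (Z : ℝ≥0∞)
    (hZpos : 0 < Z) (hZfin : Z < ⊤)
    (G : Measure Ω)
    (hG : G = ν.withDensity fun ω => (∏ k, f k ω ^ π k) / Z)
    (S : Set (Measure Ω))
    (hS : ∀ Q ∈ S, IsProbabilityMeasure Q ∧ Q ≪ ν ∧
      Integrable (fun ω => Real.log ((Q.rnDeriv ν) ω).toReal) Q ∧
      ∀ k, Integrable (fun ω => Real.log (f k ω).toReal) Q)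
    (Q₀ : Measure Ω) (hQ₀ : Q₀ ∈ S) :
    (∀ Q ∈ S, ∑ k, π k * klDiv Q₀ (P k) ≤ ∑ k, π k * klDiv Q (P k)) ↔
      ∀ Q ∈ S, klDiv Q₀ G ≤ klDiv Q G := by
  have hf0 k : ∀ᵐ ω ∂ν, f k ω ≠ 0 :=
    ae_ne_zero_of_absolutelyContinuous_withDensity (hf k) (hPf k ▸ (hequiv k).2)
  have hftop k : ∀ᵐ ω ∂ν, f k ω ≠ ∞ := by
    have : IsProbabilityMeasure (ν.withDensity (f k)) := hPf k ▸ inferInstance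
    exact ae_ne_top_of_isFiniteMeasure_withDensity (hf k)
  have key : ∀ Q ∈ S, ∑ k, π k * klDiv Q (P k) = klDiv Q G - Real.log Z.toReal := by
    intro Q hQ
    obtain ⟨hQprob, hQν, hQlog, hlog⟩ := hS Q hQ
    simp only [hPf, hG]
    exact sum_mul_klDiv_withDensity_eq_klDiv_geometricMean_sub hQν hf hf0 hftop hπsum
      hZpos.ne' hZfin.ne hQlog hlog
  refine forall₂_congr fun Q hQ => ?_
  rw [key Q₀ hQ₀, key Q hQ, sub_le_sub_iff_right]

theorem stmt10 {Ω : Type*} [MeasurableSpace Ω] (ν : Measure Ω) [SigmaFinite ν]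
    (K : ℕ) (P : Fin K → Measure Ω) [∀ k, IsProbabilityMeasure (P k)]
    (f : Fin K → Ω → ℝ≥0∞) (hf : ∀ k, Measurable (f k))
    (hPf : ∀ k, P k = ν.withDensity (f k))
    (hequiv : ∀ k, P k ≪ ν ∧ ν ≪ P k)
    (π : Fin K → ℝ) (hπ : ∀ k, π k ∈ Set.Icc (0 : ℝ) 1) (hπsum : ∑ k, π k = 1)
    (Z : ℝ≥0∞) (hZ : Z = ∫⁻ ω, ∏ k, f k ω ^ π k ∂ν)
    (hZpos : 0 < Z) (hZfin : Z < ⊤)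
    (G : Measure Ω) [IsProbabilityMeasure G]
    (hG : G = ν.withDensity fun ω => (∏ k, f k ω ^ π k) / Z)
    (S : Set (Measure Ω))
    (hS : ∀ Q ∈ S, IsProbabilityMeasure Q ∧ Q ≪ ν ∧
      Integrable (fun ω => Real.log ((Q.rnDeriv ν) ω).toReal) Q ∧
      ∀ k, Integrable (fun ω => Real.log (f k ω).toReal) Q)
    (Q₀ : Measure Ω) (hQ₀ : Q₀ ∈ S) :
    (∀ Q ∈ S, ∑ k, π k * klDiv Q₀ (P k) ≤ ∑ k, π k * klDiv Q (P k)) ↔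
      ∀ Q ∈ S, klDiv Q₀ G ≤ klDiv Q G :=
  stmt10_general ν K P f hf hPf hequiv π hπsum Z hZpos hZfin G hG S hS Q₀ hQ₀
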